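/- Let M1, M2 be matroids on ground sets E1, E2 with E1 ∩ E2 = {e}, e neither a loop nor a coloop of either, and suppose |E1| ≥ 2 and |E2| ≥ 2. Then the parallel connection P(M1,M2) is connected if and only if both M1 and M2 are connected. -/

import Mathlib

open Polynomial

namespace SPPaper

noncomputable section
open Classical

universe u
variable {α : Type u} {V : Type u}

/-- Deletion of a set of elements: `M − X`. -/
def del (M : Matroid α) (X : Set α) : Matroid α := M.restrict (M.E \ X)

/-- Contraction of a set of elements: `M/X = (M✶ − X)✶`. -/
def con (M : Matroid α) (X : Set α) : Matroid α := (del M.dual X).dual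

/-- The rank of a set: the (common) cardinality of maximal independent subsets. -/
def rk (M : Matroid α) (X : Set α) : ℕ :=
  sSup {n | ∃ I, I ⊆ X ∧ M.Indep I ∧ I.ncard = n}

/-- The rank of a matroid. -/
def rank (M : Matroid α) : ℕ := rk M M.E

/-- `e` is a loop of `M` if `{e}` is dependent. -/
def IsLoop (M : Matroid α) (e : α) : Prop := e ∈ M.E ∧ ¬ M.Indep {e}

/-- A matroid is loopless if it has no loops. -/
def Loopless (M : Matroid α) : Prop := ∀ e, ¬ IsLoop M e

/-- `e` is a coloop of `M` if it lies in every basis. -/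
def IsColoop (M : Matroid α) (e : α) : Prop := e ∈ M.E ∧ ∀ B, M.IsBase B → e ∈ B

/-- A circuit of a matroid: a minimal dependent set. -/
def IsCircuit (M : Matroid α) (C : Set α) : Prop := M.Dep C ∧ ∀ D, D ⊂ C → M.Indep D

/-- A matroid is simple if it has no loops and no two-element circuits. -/
def Simple (M : Matroid α) : Prop := Loopless M ∧ ∀ e f : α, ¬ IsCircuit M {e, f}

/-- `h(M;x) = t(M;x,0)` where `t` is the Tutte polynomial:
`t(M;x,y) = ∑_{A ⊆ E} (x−1)^(r(E)−r(A)) (y−1)^(|A|−r(A))`. -/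
def hPoly (M : Matroid α) [Fintype α] : Polynomial ℤ :=
  ∑ A ∈ (Set.toFinite M.E).toFinset.powerset,
    (Polynomial.X - 1) ^ (rank M - rk M (A : Set α)) *
      (-1 : Polynomial ℤ) ^ (A.card - rk M (A : Set α))

/-- The `i`-th entry of the h-vector of the broken circuit complex:
`h(M;x) = ∑_{i=0}^r h_i x^(r−i)`. -/
def hvec (M : Matroid α) [Fintype α] (i : ℕ) : ℤ :=
  if i ≤ rank M then (hPoly M).coeff (rank M - i) else 0

/-- The beta invariant `β(M) = (−1)^(r(E)) ∑_{A ⊆ E} (−1)^(|A|) r(A)`. -/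
def beta (M : Matroid α) [Fintype α] : ℤ :=
  (-1) ^ rank M *
    ∑ A ∈ (Set.toFinite M.E).toFinset.powerset, (-1 : ℤ) ^ A.card * (rk M (A : Set α) : ℤ)

/-- `P` is the direct sum of `M1` and `M2`. -/
def IsDirSumOf (P M1 M2 : Matroid α) : Prop :=
  ∃ h : Disjoint M1.E M2.E, P = Matroid.disjointSum M1 M2 h

/-- A matroid is connected if its ground set is nonempty and it is not the direct sum
of two matroids on nonempty ground sets. -/
def Connected (M : Matroid α) : Prop :=
  M.E.Nonempty ∧ ¬ ∃ M1 M2 : Matroid α, M1.E.Nonempty ∧ M2.E.Nonempty ∧ IsDirSumOf M M1 M2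

/-- `M` is the matroid on ground set `E` whose circuits are exactly the sets satisfying `𝒞`. -/
def HasCircuits (M : Matroid α) (E : Set α) (𝒞 : Set α → Prop) : Prop :=
  M.E = E ∧ ∀ C, IsCircuit M C ↔ 𝒞 C

/-- The circuits of the parallel connection of `M1` and `M2` with basepoint `e`. -/
def PConnCircuit (M1 M2 : Matroid α) (e : α) (C : Set α) : Prop :=
  IsCircuit M1 C ∨ IsCircuit M2 C ∨
    ∃ C1 C2, IsCircuit M1 C1 ∧ IsCircuit M2 C2 ∧ e ∈ C1 ∧ e ∈ C2 ∧ C = (C1 ∪ C2) \ {e}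

/-- The circuits of the series connection of `M1` and `M2` with basepoint `e`. -/
def SConnCircuit (M1 M2 : Matroid α) (e : α) (C : Set α) : Prop :=
  IsCircuit (del M1 {e}) C ∨ IsCircuit (del M2 {e}) C ∨
    ∃ C1 C2, IsCircuit M1 C1 ∧ IsCircuit M2 C2 ∧ e ∈ C1 ∧ e ∈ C2 ∧ C = C1 ∪ C2

/-- `P` is the parallel connection of `M1` and `M2` with respect to the basepoint `e`
(including the degenerate conventions when `e` is a loop or a coloop). -/
def IsParallelConn (P M1 M2 : Matroid α) (e : α) : Prop :=
  if IsLoop M1 e then IsDirSumOf P M1 (con M2 {e})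
  else if IsColoop M1 e then IsDirSumOf P (del M1 {e}) M2
  else if IsLoop M2 e then IsDirSumOf P (con M1 {e}) M2
  else if IsColoop M2 e then IsDirSumOf P M1 (del M2 {e})
  else HasCircuits P (M1.E ∪ M2.E) (PConnCircuit M1 M2 e)

/-- `S` is the series connection of `M1` and `M2` with respect to the basepoint `e`
(including the degenerate conventions when `e` is a loop or a coloop). -/
def IsSeriesConn (S M1 M2 : Matroid α) (e : α) : Prop :=
  if IsLoop M1 e then IsDirSumOf S (con M1 {e}) M2
  else if IsColoop M1 e then IsDirSumOf S M1 (del M2 {e})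
  else if IsLoop M2 e then IsDirSumOf S M1 (con M2 {e})
  else if IsColoop M2 e then IsDirSumOf S (del M1 {e}) M2
  else HasCircuits S (M1.E ∪ M2.E) (SConnCircuit M1 M2 e)

/-- `N` is a two-element circuit. -/
def TwoCircuit (N : Matroid α) : Prop :=
  ∃ e f : α, e ≠ f ∧ N.E = {e, f} ∧ IsCircuit N N.E

/-- `M` is a series extension of `N`: `M = S(N, C₂)` for a 2-circuit `C₂`. -/
def IsSeriesExtOf (M N : Matroid α) : Prop :=
  ∃ (C : Matroid α) (e : α), TwoCircuit C ∧ N.E ∩ C.E = {e} ∧ IsSeriesConn M N C e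

/-- `M` is a parallel extension of `N`: `M = P(N, C₂)` for a 2-circuit `C₂`. -/
def IsParallelExtOf (M N : Matroid α) : Prop :=
  ∃ (C : Matroid α) (e : α), TwoCircuit C ∧ N.E ∩ C.E = {e} ∧ IsParallelConn M N C e

/-- A series-parallel network: a matroid obtainable from a coloop by a sequence of
series and parallel extensions. -/
inductive IsSPNetwork : Matroid α → Prop
  | coloop (M : Matroid α) (e : α) : M.E = {e} → IsColoop M e → IsSPNetwork M
  | series (M N : Matroid α) : IsSPNetwork N → IsSeriesExtOf M N → IsSPNetwork M
  | parallel (M N : Matroid α) : IsSPNetwork N → IsParallelExtOf M N → IsSPNetwork M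

/-- `M` is parallel irreducible at `f`: either `M` is trivial or `M` is not the parallel
connection, with basepoint `f`, of two matroids each having at least two elements. -/
def ParallelIrreducibleAt (M : Matroid α) (f : α) : Prop :=
  M.E.Subsingleton ∨
    ¬ ∃ M1 M2 : Matroid α, M1.E ∩ M2.E = {f} ∧ M1.E.Nontrivial ∧ M2.E.Nontrivial ∧
        IsParallelConn M M1 M2 f

/-- `M` is parallel irreducible. -/
def ParallelIrreducible (M : Matroid α) : Prop := ∀ f ∈ M.E, ParallelIrreducibleAt M f

/-- `M` is the iterated parallel connection of the list `l` of matroids. -/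
inductive IsIterPConn : Matroid α → List (Matroid α) → Prop
  | base (M : Matroid α) : IsIterPConn M [M]
  | step (P M N : Matroid α) (l : List (Matroid α)) (e : α) :
      IsIterPConn P l → P.E ∩ N.E = {e} → IsParallelConn M P N e →
      IsIterPConn M (l ++ [N])

/-- `M` is the cycle matroid of the graph `G` (on the ground set `G.edgeSet`):
a set of edges is independent iff it contains no cycle. -/
def IsCycleMatroid (M : Matroid (Sym2 V)) (G : SimpleGraph V) : Prop :=
  M.E = G.edgeSet ∧ ∀ X ⊆ M.E, (M.Indep X ↔ (SimpleGraph.fromEdgeSet X).IsAcyclic)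

/-- `M` is (isomorphic to) the cycle matroid of the graph `G`. -/
def IsCycleMatroidOf (M : Matroid α) {W : Type} (G : SimpleGraph W) : Prop :=
  ∃ φ : α → Sym2 W, Set.InjOn φ M.E ∧ φ '' M.E = G.edgeSet ∧
    ∀ X ⊆ M.E, (M.Indep X ↔ (SimpleGraph.fromEdgeSet (φ '' X)).IsAcyclic)

/-- A matroid is graphic if it is isomorphic to the cycle matroid of a graph. -/
def IsGraphic (M : Matroid α) : Prop := ∃ (W : Type) (G : SimpleGraph W), IsCycleMatroidOf M G

/-- A nonempty set of elements, each lying in some circuit, such that every circuit of `M`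
containing one of them contains all of them. -/
def SeriesSet (M : Matroid α) (X : Set α) : Prop :=
  X ⊆ M.E ∧ X.Nonempty ∧ (∀ e ∈ X, ∃ C, IsCircuit M C ∧ e ∈ C) ∧
    ∀ C, IsCircuit M C → X ⊆ C ∨ Disjoint X C

/-- A series class: a maximal `SeriesSet`. -/
def SeriesClass (M : Matroid α) (X : Set α) : Prop :=
  SeriesSet M X ∧ ∀ Y, SeriesSet M Y → X ⊆ Y → X = Y

/-- A removable line of a block `G` (with cycle matroid `M`): a line (a nontrivial path
all of whose internal vertices have degree 2) whose removal (edges together with the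
internal vertices) leaves a block. -/
def IsRemovableLine (G : SimpleGraph V) (M : Matroid (Sym2 V)) (X : Set (Sym2 V)) : Prop :=
  ∃ (u v : V) (p : G.Walk u v), p.IsPath ∧ 0 < p.length ∧ X = {e | e ∈ p.edges} ∧
    (∀ w ∈ p.support, w ≠ u → w ≠ v → (G.neighborSet w).ncard = 2) ∧
    ((G.deleteEdges X).induce {w : V | ¬ (w ∈ p.support ∧ w ≠ u ∧ w ≠ v)}).Connected ∧
    Connected (del M X)

/-- One subdivision step: replace an edge `uv` by a path `u-w-v` through a new vertex `w`. -/
def SubdivStep (G G' : SimpleGraph V) : Prop :=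
  ∃ u v w : V, G.Adj u v ∧ w ∉ G.support ∧ w ≠ u ∧ w ≠ v ∧
    G' = SimpleGraph.fromEdgeSet ((G.edgeSet \ {s(u, v)}) ∪ {s(u, w), s(w, v)})

/-- `H` is a subdivision of the complete graph `K₄`. -/
def IsSubdivOfK4 (H : SimpleGraph V) : Prop :=
  ∃ f : Fin 4 ↪ V,
    Relation.ReflTransGen SubdivStep
      (SimpleGraph.fromEdgeSet {s | ∃ i j : Fin 4, i ≠ j ∧ s = s(f i, f j)}) H


/-! Connectedness is tested by separations: partitions of the ground set into two nonempty
parts with every circuit on one side. A separation of `M1` extends to `P(M1,M2)` by adding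
`E2` to the side of `e` (a circuit of `M1` through `e` lies on that side, so gluing a circuit
of `M2` to it stays there); conversely a separation of `P(M1,M2)` with `e` on one side and
some `f` on the other restricts to a separation of the `Mi` containing `f`, since circuits of
`Mi` are circuits of `P(M1,M2)`. -/

open Set

lemma isCircuit_iff_isCircuit {M : Matroid α} {C : Set α} : IsCircuit M C ↔ M.IsCircuit C := by
  rw [Matroid.isCircuit_iff_forall_ssubset]
  rfl

lemma isCircuit_disjointSum_subset {N1 N2 : Matroid α} {h : Disjoint N1.E N2.E} {C : Set α}
    (hC : (N1.disjointSum N2 h).IsCircuit C) : C ⊆ N1.E ∨ C ⊆ N2.E := by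
  by_contra! hC12
  have h1 := hC.ssubset_indep (inter_ssubset_left_iff.2 hC12.1)
  have h2 := hC.ssubset_indep (inter_ssubset_left_iff.2 hC12.2)
  simp only [Matroid.disjointSum_indep_iff, inter_assoc, inter_self] at h1 h2
  exact hC.not_indep (Matroid.disjointSum_indep_iff.2
    ⟨h1.1, h2.2.1, by simpa using hC.subset_ground⟩)

def IsSeparation (M : Matroid α) (A B : Set α) : Prop :=
  A ∪ B = M.E ∧ Disjoint A B ∧ A.Nonempty ∧ B.Nonempty ∧
    ∀ C, M.IsCircuit C → C ⊆ A ∨ C ⊆ B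

namespace IsSeparation

variable {M N : Matroid α} {A B : Set α}

lemma symm (h : IsSeparation M A B) : IsSeparation M B A :=
  ⟨by rw [union_comm, h.1], h.2.1.symm, h.2.2.2.1, h.2.2.1,
    fun C hC => (h.2.2.2.2 C hC).symm⟩

lemma isDirSumOf_restrict (h : IsSeparation M A B) :
    IsDirSumOf M (M.restrict A) (M.restrict B) := by
  obtain ⟨hU, hd, -, -, hC⟩ := h
  have hd' : Disjoint (M.restrict A).E (M.restrict B).E := hd
  refine ⟨hd', Matroid.ext_indep (by simp [hU]) fun I hIE => ?_⟩
  simp only [Matroid.disjointSum_indep_iff, Matroid.restrict_ground_eq,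
    Matroid.restrict_indep_iff, inter_subset_right, and_true, hU]
  refine ⟨fun hI => ⟨hI.subset inter_subset_left, hI.subset inter_subset_left, hIE⟩,
    fun ⟨hIA, hIB, _⟩ => ?_⟩
  rw [Matroid.indep_iff_forall_subset_not_isCircuit hIE]
  intro K hKI hK
  rcases hC K hK with hKA | hKB
  · exact hK.not_indep (hIA.subset (subset_inter hKI hKA))
  · exact hK.not_indep (hIB.subset (subset_inter hKI hKB))

lemma inter_ground (h : IsSeparation N A B) (hE : M.E ⊆ N.E)
    (hMN : ∀ C, M.IsCircuit C → N.IsCircuit C) (hA : (A ∩ M.E).Nonempty)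
    (hB : (B ∩ M.E).Nonempty) : IsSeparation M (A ∩ M.E) (B ∩ M.E) := by
  obtain ⟨hU, hd, -, -, hC⟩ := h
  refine ⟨by rw [← union_inter_distrib_right, hU, inter_eq_right.2 hE],
    hd.mono inter_subset_left inter_subset_left, hA, hB, fun C hCM => ?_⟩
  rcases hC C (hMN C hCM) with hCA | hCB
  · exact Or.inl (subset_inter hCA hCM.subset_ground)
  · exact Or.inr (subset_inter hCB hCM.subset_ground)

end IsSeparation

lemma connected_iff_forall_not_isSeparation {M : Matroid α} :
    Connected M ↔ M.E.Nonempty ∧ ∀ A B, ¬ IsSeparation M A B := by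
  refine and_congr_right fun _ => ⟨fun h A B hAB => h ⟨M.restrict A, M.restrict B,
    hAB.2.2.1, hAB.2.2.2.1, hAB.isDirSumOf_restrict⟩, ?_⟩
  rintro h ⟨N1, N2, hN1, hN2, hd, rfl⟩
  exact h N1.E N2.E ⟨by simp, hd, hN1, hN2, fun C hC => isCircuit_disjointSum_subset hC⟩

section ParallelConnection

variable {M1 M2 P : Matroid α} {e : α}

lemma pConnCircuit_comm {C : Set α} : PConnCircuit M1 M2 e C ↔ PConnCircuit M2 M1 e C := by
  unfold PConnCircuit
  constructor <;>
  · rintro (h | h | ⟨C1, C2, h1, h2, he1, he2, rfl⟩)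
    · exact Or.inr (Or.inl h)
    · exact Or.inl h
    · exact Or.inr (Or.inr ⟨C2, C1, h2, h1, he2, he1, by rw [union_comm]⟩)

lemma hasCircuits_pConnCircuit_comm (hP : HasCircuits P (M1.E ∪ M2.E) (PConnCircuit M1 M2 e)) :
    HasCircuits P (M2.E ∪ M1.E) (PConnCircuit M2 M1 e) :=
  ⟨by rw [hP.1, union_comm], fun C => (hP.2 C).trans pConnCircuit_comm⟩

lemma isCircuit_of_isCircuit_left
    (hP : HasCircuits P (M1.E ∪ M2.E) (PConnCircuit M1 M2 e)) {C : Set α}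
    (hC : M1.IsCircuit C) : P.IsCircuit C :=
  isCircuit_iff_isCircuit.1 ((hP.2 C).2 (Or.inl (isCircuit_iff_isCircuit.2 hC)))

lemma IsSeparation.pConn (hE : M1.E ∩ M2.E = {e})
    (hP : HasCircuits P (M1.E ∪ M2.E) (PConnCircuit M1 M2 e)) {A B : Set α}
    (h : IsSeparation M1 A B) (heA : e ∈ A) : IsSeparation P (A ∪ M2.E) B := by
  obtain ⟨hU, hd, hA, hB, hC⟩ := h
  have hBM2 : Disjoint B M2.E := by
    rw [disjoint_left]
    intro x hxB hx2
    have hxe : x ∈ M1.E ∩ M2.E := ⟨hU ▸ Or.inr hxB, hx2⟩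
    rw [hE, mem_singleton_iff] at hxe
    exact disjoint_left.1 hd (hxe ▸ heA) hxB
  refine ⟨by rw [hP.1, ← hU, union_right_comm], disjoint_union_left.2 ⟨hd, hBM2.symm⟩,
    hA.mono subset_union_left, hB, fun C hCP => ?_⟩
  rcases (hP.2 C).1 (isCircuit_iff_isCircuit.2 hCP) with h1 | h2 | ⟨C1, C2, h1, h2, he1, -, rfl⟩
  · exact (hC C (isCircuit_iff_isCircuit.1 h1)).imp_left (·.trans subset_union_left)
  · exact Or.inl ((isCircuit_iff_isCircuit.1 h2).subset_ground.trans subset_union_right)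
  · have hC1A : C1 ⊆ A :=
      (hC C1 (isCircuit_iff_isCircuit.1 h1)).resolve_right fun hC1B =>
        disjoint_left.1 hd heA (hC1B he1)
    exact Or.inl (sdiff_subset.trans (union_subset_union hC1A
      (isCircuit_iff_isCircuit.1 h2).subset_ground))

lemma Connected.left_of_pConn (hE : M1.E ∩ M2.E = {e})
    (hP : HasCircuits P (M1.E ∪ M2.E) (PConnCircuit M1 M2 e)) (h : Connected P) :
    Connected M1 := by
  have he : e ∈ M1.E ∩ M2.E := hE ▸ rfl
  rw [connected_iff_forall_not_isSeparation] at h ⊢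
  refine ⟨⟨e, he.1⟩, fun A B hAB => ?_⟩
  rcases (hAB.1 ▸ he.1 : e ∈ A ∪ B) with heA | heB
  · exact h.2 _ _ (hAB.pConn hE hP heA)
  · exact h.2 _ _ (hAB.symm.pConn hE hP heB)

lemma Connected.pConn (hE : M1.E ∩ M2.E = {e})
    (hP : HasCircuits P (M1.E ∪ M2.E) (PConnCircuit M1 M2 e))
    (h1 : Connected M1) (h2 : Connected M2) : Connected P := by
  have he : e ∈ M1.E ∩ M2.E := hE ▸ rfl
  rw [connected_iff_forall_not_isSeparation] at h1 h2 ⊢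
  have hsep : ∀ A B, IsSeparation P A B → e ∈ A → False := by
    intro A B hAB heA
    obtain ⟨f, hfB⟩ := hAB.2.2.2.1
    rcases (hP.1 ▸ hAB.1 ▸ Or.inr hfB : f ∈ M1.E ∪ M2.E) with hf1 | hf2
    · exact h1.2 _ _ (hAB.inter_ground (hP.1 ▸ subset_union_left)
        (fun _ => isCircuit_of_isCircuit_left hP) ⟨e, heA, he.1⟩ ⟨f, hfB, hf1⟩)
    · exact h2.2 _ _ (hAB.inter_ground (hP.1 ▸ subset_union_right)
        (fun _ => isCircuit_of_isCircuit_left (hasCircuits_pConnCircuit_comm hP))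
        ⟨e, heA, he.2⟩ ⟨f, hfB, hf2⟩)
  refine ⟨⟨e, hP.1 ▸ Or.inl he.1⟩, fun A B hAB => ?_⟩
  rcases (hAB.1 ▸ hP.1 ▸ Or.inl he.1 : e ∈ A ∪ B) with heA | heB
  · exact hsep A B hAB heA
  · exact hsep B A hAB.symm heB

end ParallelConnection

theorem stmt7_general (M1 M2 P : Matroid α) (e : α)
    (hE : M1.E ∩ M2.E = {e})
    (hl1 : ¬ IsLoop M1 e) (hc1 : ¬ IsColoop M1 e)
    (hl2 : ¬ IsLoop M2 e) (hc2 : ¬ IsColoop M2 e)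
    (hP : IsParallelConn P M1 M2 e) :
    Connected P ↔ Connected M1 ∧ Connected M2 := by
  rw [IsParallelConn, if_neg hl1, if_neg hc1, if_neg hl2, if_neg hc2] at hP
  exact ⟨fun h => ⟨h.left_of_pConn hE hP,
      h.left_of_pConn (by rwa [inter_comm]) (hasCircuits_pConnCircuit_comm hP)⟩,
    fun ⟨h1, h2⟩ => h1.pConn hE hP h2⟩

/-- if `|E1|, |E2| ≥ 2` then `P(M1,M2)` is connected iff both `M1` and
`M2` are connected. -/
theorem stmt7 (M1 M2 P : Matroid α) (e : α)
    (hE : M1.E ∩ M2.E = {e})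
    (hl1 : ¬ IsLoop M1 e) (hc1 : ¬ IsColoop M1 e)
    (hl2 : ¬ IsLoop M2 e) (hc2 : ¬ IsColoop M2 e)
    (hP : IsParallelConn P M1 M2 e)
    (hnt1 : M1.E.Nontrivial) (hnt2 : M2.E.Nontrivial) :
    Connected P ↔ Connected M1 ∧ Connected M2 :=
  stmt7_general M1 M2 P e hE hl1 hc1 hl2 hc2 hP

end

end SPPaper
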